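/- The language IP_* is context-free but does not belong to 1PLIN/lin; that is, IP_* is a context-free language, and for every finite advice alphabet Γ, every advice function h : ℕ → Γ* with |h(n)| = n, and every rational 1pfa M over the alphabet {0,1} × Γ, it is not the case that for all x ∈ {0,1}*: x ∈ IP_* if and only if p_acc([x//h(|x|)]) > 1/2. Hence CFL ⊄ 1PLIN/lin. -/

import Mathlib

open scoped BigOperators

/-- A rational one-way probabilistic finite automaton over alphabet `Λ`
(with endmarker matrices `matC` for ¢ and `matD` for $). -/
structure PFA (Λ : Type) where
  Q : Type
  fin : Fintype Q
  dec : DecidableEq Q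
  start : Q
  final : Finset Q
  matC : Matrix Q Q ℚ
  matD : Matrix Q Q ℚ
  mat : Λ → Matrix Q Q ℚ
  nonnegC : ∀ i j, 0 ≤ matC i j
  nonnegD : ∀ i j, 0 ≤ matD i j
  nonnegMat : ∀ σ i j, 0 ≤ mat σ i j
  rowC : ∀ i, ∑ j ∈ fin.elems, matC i j = 1
  rowD : ∀ i, ∑ j ∈ fin.elems, matD i j = 1
  rowMat : ∀ σ i, ∑ j ∈ fin.elems, mat σ i j = 1

/-- Acceptance probability of a 1pfa on an input string. -/
def PFA.accProb {Λ : Type} (M : PFA Λ) (x : List Λ) : ℚ :=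
  letI := M.fin
  letI := M.dec
  ∑ q ∈ M.final,
    (Matrix.vecMul
      (x.foldl (fun v σ => Matrix.vecMul v (M.mat σ))
        (Matrix.vecMul (Pi.single M.start 1) M.matC))
      M.matD) q

/-- `D` is a probability distribution on `Γ^n`. -/
def IsDist {Γ : Type} [Fintype Γ] {n : ℕ} (D : List.Vector Γ n → ℝ) : Prop :=
  (∀ y, 0 ≤ D y) ∧ ∑ y, D y = 1

open Classical in
/-- Probability, under randomized advice `D`, that the track string `[x//y]` lies in `L`. -/
noncomputable def randAccProb {Alp Γ : Type} [Fintype Γ] (L : Set (List (Alp × Γ)))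
    {n : ℕ} (D : List.Vector Γ n → ℝ) (x : List Alp) : ℝ :=
  ∑ y : List.Vector Γ n, if x.zip y.toList ∈ L then D y else 0

/-- `S ∈ REG/n`. -/
def InREGn {Alp : Type} (S : Set (List Alp)) : Prop :=
  ∃ (Γ : Type) (_ : Fintype Γ) (h : ℕ → List Γ), (∀ n, (h n).length = n) ∧
    ∃ (Q : Type) (_ : Fintype Q) (M : DFA (Alp × Γ) Q),
      ∀ x : List Alp, x ∈ S ↔ x.zip (h x.length) ∈ M.accepts

/-- `S ∈ REG/Rn` (bounded error, randomized advice). -/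
def InREGRn {Alp : Type} (S : Set (List Alp)) : Prop :=
  ∃ (Γ : Type) (iΓ : Fintype Γ),
    letI := iΓ
    ∃ (Q : Type) (_ : Fintype Q) (M : DFA (Alp × Γ) Q) (ε : ℝ),
      0 ≤ ε ∧ ε < 1 / 2 ∧
        ∃ D : (n : ℕ) → List.Vector Γ n → ℝ, (∀ n, IsDist (D n)) ∧
          ∀ (n : ℕ) (x : List Alp), x.length = n →
            (x ∈ S → 1 - ε ≤ randAccProb M.accepts (D n) x) ∧
            (x ∉ S → randAccProb M.accepts (D n) x ≤ ε)

/-- `S ∈ CFL/n`. -/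
def InCFLn {Alp : Type} (S : Set (List Alp)) : Prop :=
  ∃ (Γ : Type) (_ : Fintype Γ) (h : ℕ → List Γ), (∀ n, (h n).length = n) ∧
    ∃ L : Language (Alp × Γ), L.IsContextFree ∧
      ∀ x : List Alp, x ∈ S ↔ x.zip (h x.length) ∈ L

/-- `S ∈ CFL/Rn` (bounded error, randomized advice). -/
def InCFLRn {Alp : Type} (S : Set (List Alp)) : Prop :=
  ∃ (Γ : Type) (iΓ : Fintype Γ),
    letI := iΓ
    ∃ (L : Language (Alp × Γ)), L.IsContextFree ∧
      ∃ (ε : ℝ), 0 ≤ ε ∧ ε < 1 / 2 ∧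
        ∃ D : (n : ℕ) → List.Vector Γ n → ℝ, (∀ n, IsDist (D n)) ∧
          ∀ (n : ℕ) (x : List Alp), x.length = n →
            (x ∈ S → 1 - ε ≤ randAccProb L (D n) x) ∧
            (x ∉ S → randAccProb L (D n) x ≤ ε)

/-- `A ∈ 1C=LIN/lin` via the paper's 1pfa characterization. -/
def InOneCeqLin {Alp : Type} (A : Set (List Alp)) : Prop :=
  ∃ (Γ : Type) (_ : Fintype Γ) (h : ℕ → List Γ), (∀ n, (h n).length = n) ∧
    ∃ M : PFA (Alp × Γ),
      ∀ x : List Alp, x ∈ A ↔ M.accProb (x.zip (h x.length)) = 1 / 2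

/-- `A ∈ 1PLIN/lin` via the paper's 1pfa characterization. -/
def InOnePLin {Alp : Type} (A : Set (List Alp)) : Prop :=
  ∃ (Γ : Type) (_ : Fintype Γ) (h : ℕ → List Γ), (∀ n, (h n).length = n) ∧
    ∃ M : PFA (Alp × Γ),
      ∀ x : List Alp, x ∈ A ↔ 1 / 2 < M.accProb (x.zip (h x.length))

open Classical in
/-- `(A, μ) ∈ aver-REG/n`. -/
def InAverREGn {Alp : Type} [Fintype Alp] (A : Set (List Alp))
    (μ : (n : ℕ) → List.Vector Alp n → ℝ) : Prop :=
  ∃ (Γ : Type) (_ : Fintype Γ) (h : ℕ → List Γ), (∀ n, (h n).length = n) ∧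
    ∃ (Q : Type) (_ : Fintype Q) (M : DFA (Alp × Γ) Q) (ε : ℝ),
      0 ≤ ε ∧ ε < 1 / 2 ∧
        ∀ n : ℕ, 1 - ε ≤ ∑ x : List.Vector Alp n,
          if (x.toList.zip (h n) ∈ M.accepts ↔ x.toList ∈ A) then μ n x else 0

/-- The language `Dup = {ww : w ∈ {0,1}*}`. -/
def Dup : Set (List Bool) := {z | ∃ w : List Bool, z = w ++ w}

/-- The marked palindrome language `Pal_# = {w#w^R}` over the alphabet
`Option Bool` (with `none` playing the role of the marker `#`). -/
def PalHash : Set (List (Option Bool)) :=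
  {z | ∃ w : List Bool, z = w.map some ++ none :: (w.reverse.map some)}

/-- Inner product (number of common `true` positions) of two bit strings. -/
def innerProd (u v : List Bool) : ℕ :=
  ((u.zip v).filter fun p => p.1 && p.2).length

/-- The language `IP_* = {axy : a ∈ {λ,0,1}, |x| = |y|, x^R ⊙ y ≡ 0 (mod 2)}`. -/
def IPstar : Language Bool :=
  {z | ∃ a x y : List Bool, (a = [] ∨ a = [false] ∨ a = [true]) ∧
    z = a ++ x ++ y ∧ x.length = y.length ∧ innerProd x.reverse y % 2 = 0}

/-- A negligible function. -/
def Negligible (f : ℕ → ℝ) : Prop :=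
  ∀ k : ℕ, 0 < k → ∃ N : ℕ, ∀ n ≥ N, f n ≤ 1 / (n : ℝ) ^ k

/-- `L` is `REG/n`-pseudorandom. -/
def RegPseudorandom {Alp : Type} [Fintype Alp] (L : Set (List Alp)) : Prop :=
  ∀ B : Set (List Alp), InREGn B →
    Negligible fun n =>
      |(((symmDiff B L) ∩ {x | x.length = n}).ncard : ℝ) /
        (Fintype.card Alp : ℝ) ^ n - 1 / 2|

/-!
`IP_*` is generated by a grammar in which the nonterminal `some p` derives the words `x ++ y` with
`|x| = |y|` and `x^R ⊙ y ≡ p (mod 2)`: a rule `a (some q) b` peels off the outermost pair `(x₁, yₙ)`,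
which changes the parity by `a && b`.

For the lower bound, cut an input of length `2m` in the middle: the acceptance probability on
`[u v // h(2m)]` is the dot product of the state distribution `α(u)` after the advised prefix with
a vector `β(v)` depending only on the advised suffix. For `m = |Q| + 2` the points `α(e_i^R)` have a
Radon partition `(I, Iᶜ)`. The suffix `v` with `v_j = 1` iff `j ∉ I` puts `e_i^R v` in `IP_*` exactly
when `i ∈ I`, so the half-space `⟨·, β(v)⟩ > 1/2` would separate `I` from `Iᶜ`: impossible.
-/

section ContextFree

variable {T N : Type*}

def Symbol.lang (L : N → Language T) : Symbol T N → Language T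
  | .terminal t => {[t]}
  | .nonterminal n => L n

def sententialLang (L : N → Language T) (u : List (Symbol T N)) : Language T :=
  (u.map (Symbol.lang L)).prod

variable (L : N → Language T)

@[simp]
lemma sententialLang_nil : sententialLang L [] = 1 := rfl

@[simp]
lemma sententialLang_cons (s : Symbol T N) (u : List (Symbol T N)) :
    sententialLang L (s :: u) = s.lang L * sententialLang L u := by
  simp [sententialLang]

@[simp]
lemma sententialLang_append (u v : List (Symbol T N)) :
    sententialLang L (u ++ v) = sententialLang L u * sententialLang L v := by
  simp [sententialLang]

@[simp]
lemma sententialLang_map_terminal (w : List T) :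
    sententialLang L (w.map Symbol.terminal) = {w} := by
  induction w with
  | nil => rfl
  | cons t w ih => rw [List.map_cons, sententialLang_cons, ih]; exact Set.image2_singleton

namespace ContextFreeGrammar

variable {g : ContextFreeGrammar T} {L : g.NT → Language T}

lemma Produces.sententialLang_le
    (hL : ∀ r ∈ g.rules, sententialLang L r.output ≤ L r.input) {u v : List (Symbol T g.NT)}
    (h : g.Produces u v) : sententialLang L v ≤ sententialLang L u := by
  obtain ⟨r, hr, hrw⟩ := h
  obtain ⟨p, q, rfl, rfl⟩ := hrw.exists_parts
  simp only [sententialLang_append, sententialLang_cons, sententialLang_nil, mul_one]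
  gcongr
  exact hL r hr

lemma Derives.sententialLang_le
    (hL : ∀ r ∈ g.rules, sententialLang L r.output ≤ L r.input) {u v : List (Symbol T g.NT)}
    (h : g.Derives u v) : sententialLang L v ≤ sententialLang L u := by
  induction h with
  | refl => rfl
  | tail _ hp ih => exact (hp.sententialLang_le hL).trans ih

theorem language_le_of_rules (hL : ∀ r ∈ g.rules, sententialLang L r.output ≤ L r.input) :
    g.language ≤ L g.initial := by
  intro w hw
  have := Derives.sententialLang_le hL hw (by rw [sententialLang_map_terminal]; rfl)
  simpa [Symbol.lang] using this

lemma derives_of_mem_rules {n n' : g.NT} {u v : List (Symbol T g.NT)}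
    (hr : ⟨n, u ++ [.nonterminal n'] ++ v⟩ ∈ g.rules) {w : List (Symbol T g.NT)}
    (h : g.Derives [.nonterminal n'] w) : g.Derives [.nonterminal n] (u ++ w ++ v) :=
  Produces.trans_derives ⟨_, hr, ContextFreeRule.Rewrites.input_output⟩
    ((h.append_left u).append_right v)

end ContextFreeGrammar

end ContextFree

def parityLang (p : Bool) : Language Bool :=
  {z | ∃ x y : List Bool, x.length = y.length ∧ z = x ++ y ∧ (innerProd x.reverse y).bodd = p}

lemma innerProd_append_singleton {x y : List Bool} (h : x.length = y.length) (a b : Bool) :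
    innerProd (x ++ [a]) (y ++ [b]) = innerProd x y + (a && b).toNat := by
  cases hab : a && b <;> simp [innerProd, List.zip_append h, hab]

lemma bodd_innerProd_cons_append_singleton {x y : List Bool} (h : x.length = y.length)
    (a b : Bool) :
    (innerProd (a :: x).reverse (y ++ [b])).bodd = ((innerProd x.reverse y).bodd ^^ (a && b)) := by
  rw [List.reverse_cons, innerProd_append_singleton (by simpa using h)]
  cases a && b <;> simp

lemma cons_append_singleton_mem_parityLang {q : Bool} {w : List Bool} (hw : w ∈ parityLang q)
    (a b : Bool) : a :: (w ++ [b]) ∈ parityLang (q ^^ (a && b)) := by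
  obtain ⟨x, y, hxy, rfl, rfl⟩ := hw
  exact ⟨a :: x, y ++ [b], by simp [hxy], by simp,
    bodd_innerProd_cons_append_singleton hxy a b⟩

/-- `none` is the start symbol and `some p` generates `parityLang p`. -/
def ipRules : Finset (ContextFreeRule Bool (Option Bool)) :=
  insert ⟨some false, []⟩ <|
    (({[], [false], [true]} : Finset (List Bool)).image fun a =>
      ⟨none, a.map .terminal ++ [.nonterminal (some false)]⟩) ∪
    (Finset.univ : Finset (Bool × Bool × Bool)).image fun ⟨a, b, q⟩ =>
      ⟨some (q ^^ (a && b)), [.terminal a, .nonterminal (some q), .terminal b]⟩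

abbrev ipGrammar : ContextFreeGrammar Bool := ⟨Option Bool, none, ipRules⟩

lemma ipGrammar_language_le : ipGrammar.language ≤ IPstar := by
  refine ContextFreeGrammar.language_le_of_rules (g := ipGrammar)
    (L := fun n : Option Bool => n.elim IPstar parityLang) fun r hr => ?_
  simp only [ipRules, Finset.mem_insert, Finset.mem_singleton, Finset.mem_union, Finset.mem_image,
    Finset.mem_univ, true_and] at hr
  rcases hr with rfl | ⟨a, ha, rfl⟩ | ⟨⟨a, b, q⟩, rfl⟩
  · rintro z (rfl : z = [])
    exact ⟨[], [], rfl, rfl, rfl⟩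
  · intro z hz
    simp only [sententialLang_append, sententialLang_map_terminal, sententialLang_cons,
      sententialLang_nil, Symbol.lang, mul_one] at hz
    obtain ⟨_, rfl, w, ⟨x, y, hxy, rfl, hp⟩, rfl⟩ := hz
    exact ⟨_, x, y, ha, by simp, hxy, by simp [Nat.mod_two_of_bodd, hp]⟩
  · intro z hz
    simp only [sententialLang_cons, sententialLang_nil, Symbol.lang, mul_one] at hz
    obtain ⟨_, rfl, _, ⟨w, hw, _, rfl, rfl⟩, rfl⟩ := hz
    exact cons_append_singleton_mem_parityLang hw a b

lemma ipGrammar_derives_parity {x y : List Bool} (h : x.length = y.length) :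
    ipGrammar.Derives [.nonterminal (some (innerProd x.reverse y).bodd)]
      ((x ++ y).map .terminal) := by
  induction x generalizing y with
  | nil =>
    obtain rfl : y = [] := List.length_eq_zero_iff.mp h.symm
    exact ContextFreeGrammar.Produces.single
      ⟨⟨some false, []⟩, by simp [ipRules], ContextFreeRule.Rewrites.input_output⟩
  | cons a x ih =>
    obtain ⟨y, b, rfl⟩ := (List.eq_nil_or_concat y).resolve_left (by rintro rfl; simp at h)
    rw [List.concat_eq_append] at h ⊢
    have hxy : x.length = y.length := by simpa using h
    rw [bodd_innerProd_cons_append_singleton hxy]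
    simpa using ContextFreeGrammar.derives_of_mem_rules (u := [.terminal a]) (v := [.terminal b])
      (Finset.mem_insert_of_mem <| Finset.mem_union_right _ <|
        Finset.mem_image_of_mem _ (Finset.mem_univ (a, b, _))) (ih hxy)

lemma IPstar_le_ipGrammar_language : IPstar ≤ ipGrammar.language := by
  rintro _ ⟨a, x, y, ha, rfl, hxy, hp⟩
  have hE := ipGrammar_derives_parity hxy
  rw [show (innerProd x.reverse y).bodd = false by simpa [Nat.mod_two_of_bodd] using hp] at hE
  have hr : ⟨none, a.map .terminal ++ [.nonterminal (some false)]⟩ ∈ ipRules :=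
    Finset.mem_insert_of_mem <| Finset.mem_union_left _ <|
      Finset.mem_image_of_mem _ (s := {[], [false], [true]}) (by simpa using ha)
  refine (ContextFreeGrammar.mem_language_iff _ _).mpr ?_
  simpa using ContextFreeGrammar.derives_of_mem_rules (g := ipGrammar) (v := [])
    (by simpa using hr) hE

theorem IPstar_isContextFree : IPstar.IsContextFree :=
  ⟨ipGrammar, le_antisymm ipGrammar_language_le IPstar_le_ipGrammar_language⟩

namespace PFA

open Matrix

variable {Λ : Type} (M : PFA Λ)

instance : Fintype M.Q := M.fin

instance : DecidableEq M.Q := M.dec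

def stateAfter (x : List Λ) : M.Q → ℚ :=
  x.foldl (fun v σ => v ᵥ* M.mat σ) (Pi.single M.start 1 ᵥ* M.matC)

def acceptVec (y : List Λ) : M.Q → ℚ :=
  (y.map M.mat).prod *ᵥ (M.matD *ᵥ fun q => if q ∈ M.final then 1 else 0)

lemma foldl_vecMul_mat (v : M.Q → ℚ) (y : List Λ) :
    y.foldl (fun v σ => v ᵥ* M.mat σ) v = v ᵥ* (y.map M.mat).prod := by
  induction y generalizing v with
  | nil => simp
  | cons σ y ih => simp [ih, vecMul_vecMul]

lemma stateAfter_append (x y : List Λ) :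
    M.stateAfter (x ++ y) = M.stateAfter x ᵥ* (y.map M.mat).prod := by
  rw [stateAfter, List.foldl_append, foldl_vecMul_mat, stateAfter]

lemma accProb_append (x y : List Λ) :
    M.accProb (x ++ y) = M.stateAfter x ⬝ᵥ M.acceptVec y := by
  rw [acceptVec, dotProduct_mulVec, dotProduct_mulVec, ← stateAfter_append]
  simp [accProb, stateAfter, dotProduct]

end PFA

theorem exists_set_not_cut_by_halfSpace {ι 𝕜 E : Type*} [Fintype ι] [Field 𝕜] [LinearOrder 𝕜]
    [IsStrictOrderedRing 𝕜] [AddCommGroup E] [Module 𝕜 E] [FiniteDimensional 𝕜 E] {f : ι → E}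
    (hcard : Module.finrank 𝕜 E + 1 < Fintype.card ι) :
    ∃ I : Set ι, ∀ (φ : E →ₗ[𝕜] 𝕜) (t : 𝕜), ¬ ∀ i, i ∈ I ↔ t < φ (f i) := by
  have hdep : ¬ AffineIndependent 𝕜 f := fun h =>
    (h.card_le_finrank_succ.trans (Nat.add_le_add_right (Submodule.finrank_le _) 1)).not_gt hcard
  obtain ⟨I, p, hpI, hpIc⟩ := Convex.radon_partition hdep
  refine ⟨I, fun φ t hφ => ?_⟩
  have hgt : t < φ p := convexHull_min (by rintro _ ⟨i, hi, rfl⟩; exact (hφ i).1 hi)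
    (convex_halfSpace_gt φ.isLinear t) hpI
  have hle : φ p ≤ t := convexHull_min (by rintro _ ⟨i, hi, rfl⟩; exact not_lt.1 (mt (hφ i).2 hi))
    (convex_halfSpace_le φ.isLinear t) hpIc
  exact hle.not_gt hgt

lemma innerProd_cons (a b : Bool) (x y : List Bool) :
    innerProd (a :: x) (b :: y) = (a && b).toNat + innerProd x y := by
  cases hab : a && b <;> simp [innerProd, hab, Nat.add_comm]

lemma innerProd_ofFn {m : ℕ} (f g : Fin m → Bool) :
    innerProd (List.ofFn f) (List.ofFn g) = ∑ j, (f j && g j).toNat := by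
  induction m with
  | zero => rfl
  | succ n ih => rw [List.ofFn_succ, List.ofFn_succ, innerProd_cons, Fin.sum_univ_succ, ih]

lemma append_mem_IPstar_iff {x y : List Bool} (hxy : x.length = y.length) :
    x ++ y ∈ IPstar ↔ innerProd x.reverse y % 2 = 0 := by
  refine ⟨fun ⟨a, x', y', ha, heq, hlen, hpar⟩ => ?_, fun h => ⟨[], x, y, Or.inl rfl, rfl, hxy, h⟩⟩
  have hL := congrArg List.length heq
  rcases ha with rfl | rfl | rfl
  · rw [List.nil_append] at heq
    obtain ⟨rfl, rfl⟩ := List.append_inj heq (by simp at hL; omega)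
    exact hpar
  all_goals simp at hL; omega

lemma unitVector_reverse_append_mem_IPstar_iff {m : ℕ} (i : Fin m) (s : Fin m → Bool) :
    (List.ofFn fun j => decide (j = i)).reverse ++ List.ofFn s ∈ IPstar ↔ s i = false := by
  rw [append_mem_IPstar_iff (by simp), List.reverse_reverse, innerProd_ofFn,
    Finset.sum_eq_single i (fun j _ hj => by simp [hj]) (by simp)]
  cases s i <;> simp

theorem IPstar_not_inOnePLin : ¬ InOnePLin IPstar := by
  classical
  rintro ⟨Γ, _, h, hlen, M, hM⟩
  set m := Fintype.card M.Q + 2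
  set g := h (2 * m)
  let u : Fin m → List Bool := fun i => (List.ofFn fun j => decide (j = i)).reverse
  obtain ⟨I, hI⟩ := exists_set_not_cut_by_halfSpace (𝕜 := ℚ)
    (f := fun i => M.stateAfter ((u i).zip (g.take m))) (by simp [m])
  let v : List Bool := List.ofFn fun j => decide (j ∉ I)
  refine hI ((dotProductBilin ℚ ℚ).flip (M.acceptVec (v.zip (g.drop m)))) (1 / 2) fun i => ?_
  have hlen_uv : (u i ++ v).length = 2 * m := by simp [u, v]; omega
  have hsplit : (u i ++ v).zip g = (u i).zip (g.take m) ++ v.zip (g.drop m) := by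
    rw [← List.zip_append (by simp [u, g, hlen]; omega), List.take_append_drop]
  calc i ∈ I ↔ u i ++ v ∈ IPstar := by rw [unitVector_reverse_append_mem_IPstar_iff]; simp
    _ ↔ 1 / 2 < M.accProb ((u i ++ v).zip (h (u i ++ v).length)) := hM _
    _ ↔ _ := by rw [hlen_uv, hsplit, M.accProb_append]; rfl

theorem stmt6 : IPstar.IsContextFree ∧ ¬ InOnePLin IPstar :=
  ⟨IPstar_isContextFree, IPstar_not_inOnePLin⟩
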